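/- For a finite set A of atoms within a finite vocabulary V, the program Π_A = { ¬(⋁_{b ∈ V∖A} b) → a : a ∈ A } has a unique equilibrium model over V, namely ⟨A,A⟩. -/

import Mathlib

/-- Propositional formulas over atoms ℕ. -/
inductive Fm where
  | atom : ℕ → Fm
  | bot  : Fm
  | and  : Fm → Fm → Fm
  | or   : Fm → Fm → Fm
  | imp  : Fm → Fm → Fm
deriving DecidableEq

def Fm.neg (φ : Fm) : Fm := Fm.imp φ Fm.bot
def Fm.top : Fm := Fm.imp Fm.bot Fm.bot

/-- Truth at the "there" world (classical truth in T). -/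
def satT (T : Set ℕ) : Fm → Prop
  | .atom a  => a ∈ T
  | .bot     => False
  | .and φ ψ => satT T φ ∧ satT T ψ
  | .or φ ψ  => satT T φ ∨ satT T ψ
  | .imp φ ψ => satT T φ → satT T ψ

/-- Truth at the "here" world of the HT-interpretation ⟨H,T⟩. -/
def satH (H T : Set ℕ) : Fm → Prop
  | .atom a  => a ∈ H
  | .bot     => False
  | .and φ ψ => satH H T φ ∧ satH H T ψ
  | .or φ ψ  => satH H T φ ∨ satH H T ψ
  | .imp φ ψ => (satH H T φ → satH H T ψ) ∧ (satT T φ → satT T ψ)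

/-- ⟨H,T⟩ is an HT-model of φ (true at both worlds). -/
def htSat (H T : Set ℕ) (φ : Fm) : Prop := satH H T φ ∧ satT T φ

/-- ⟨H,T⟩ is an HT-model of the theory Γ. -/
def htSatTh (H T : Set ℕ) (Γ : Set Fm) : Prop := ∀ φ ∈ Γ, htSat H T φ

/-- Atoms occurring in a formula. -/
def vars : Fm → Finset ℕ
  | .atom a  => {a}
  | .bot     => ∅
  | .and φ ψ => vars φ ∪ vars ψ
  | .or φ ψ  => vars φ ∪ vars ψ
  | .imp φ ψ => vars φ ∪ vars ψ

/-- Atoms occurring in a theory. -/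
def varsTh (Γ : Set Fm) : Set ℕ := ⋃ φ ∈ Γ, (vars φ : Set ℕ)

/-- HT-consequence: every world of every HT-interpretation making all of Γ true makes φ true. -/
def htConseqTh (Γ : Set Fm) (φ : Fm) : Prop :=
  ∀ H T : Set ℕ, H ⊆ T →
    ((∀ ψ ∈ Γ, satH H T ψ) → satH H T φ) ∧ ((∀ ψ ∈ Γ, satT T ψ) → satT T φ)

/-- ⟨T,T⟩ is an equilibrium model of Γ over vocabulary V. -/
def eqModel (V : Set ℕ) (Γ : Set Fm) (T : Set ℕ) : Prop :=
  T ⊆ V ∧ htSatTh T T Γ ∧ ∀ H : Set ℕ, H ⊆ T → H ≠ T → ¬ htSatTh H T Γ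

def bigAnd (l : List Fm) : Fm := l.foldr Fm.and Fm.top
def bigOr (l : List Fm) : Fm := l.foldr Fm.or Fm.bot
noncomputable def conjAtoms (s : Finset ℕ) : Fm := bigAnd (s.toList.map Fm.atom)
noncomputable def disjAtoms (s : Finset ℕ) : Fm := bigOr (s.toList.map Fm.atom)
/-- δ_T over vocabulary V : (⋀_{a∈T} a) ∧ ¬(⋁_{a∈V∖T} a). -/
noncomputable def delta (V T : Finset ℕ) : Fm := Fm.and (conjAtoms T) (Fm.neg (disjAtoms (V \ T)))

/-! The rules of Π_A share the body ¬D with D = ⋁(V∖A). By persistence, ⟨H,T⟩ satisfies ¬D → a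
exactly when D false in T forces a ∈ H. So if T meets V∖A, every ⟨H,T⟩ is a model and ⟨∅,T⟩
refutes minimality; hence T ⊆ A, and then the rules force A ⊆ T. Conversely, every model ⟨H,A⟩
has A ⊆ H, so ⟨A,A⟩ is in equilibrium. -/

theorem satT_of_satH {H T : Set ℕ} (hHT : H ⊆ T) {φ : Fm} (h : satH H T φ) : satT T φ := by
  induction φ with
  | atom a => exact hHT h
  | bot => exact h
  | and φ ψ ihφ ihψ => exact ⟨ihφ h.1, ihψ h.2⟩
  | or φ ψ ihφ ihψ => exact h.imp ihφ ihψ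
  | imp φ ψ _ _ => exact h.2

theorem satH_neg {H T : Set ℕ} (hHT : H ⊆ T) (φ : Fm) : satH H T φ.neg ↔ ¬ satT T φ := by
  simp only [Fm.neg, satH, satT, imp_false]
  exact ⟨And.right, fun h => ⟨mt (satT_of_satH hHT) h, h⟩⟩

theorem htSat_neg_imp_atom {H T : Set ℕ} (hHT : H ⊆ T) (φ : Fm) (a : ℕ) :
    htSat H T (Fm.imp φ.neg (.atom a)) ↔ (¬ satT T φ → a ∈ H) := by
  simp only [htSat, satH, satT, satH_neg hHT]
  exact ⟨fun h => h.1.1, fun h => ⟨⟨h, fun hφ => hHT (h hφ)⟩, fun hφ => hHT (h hφ)⟩⟩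

theorem htSatTh_neg_imp_atoms {H T : Set ℕ} (hHT : H ⊆ T) (φ : Fm) (A : Finset ℕ) :
    htSatTh H T {ψ : Fm | ∃ a ∈ A, ψ = Fm.imp φ.neg (.atom a)} ↔ (¬ satT T φ → ↑A ⊆ H) := by
  constructor
  · intro h hφ a ha
    exact (htSat_neg_imp_atom hHT φ a).1 (h _ ⟨a, ha, rfl⟩) hφ
  · rintro h _ ⟨a, ha, rfl⟩
    exact (htSat_neg_imp_atom hHT φ a).2 fun hφ => h hφ ha

theorem satT_bigOr (T : Set ℕ) (l : List Fm) : satT T (bigOr l) ↔ ∃ φ ∈ l, satT T φ := by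
  induction l with
  | nil => simp [bigOr, satT]
  | cons φ l ih => simp [bigOr, satT, ← ih]

theorem satT_disjAtoms (T : Set ℕ) (s : Finset ℕ) :
    satT T (disjAtoms s) ↔ ∃ a ∈ s, a ∈ T := by
  simp [disjAtoms, satT_bigOr, satT]

theorem not_satT_disjAtoms_sdiff_iff {V A : Finset ℕ} {T : Set ℕ} (hTV : T ⊆ V) :
    ¬ satT T (disjAtoms (V \ A)) ↔ T ⊆ A := by
  rw [satT_disjAtoms]
  constructor
  · intro h b hbT
    by_contra hbA
    exact h ⟨b, Finset.mem_sdiff.mpr ⟨hTV hbT, hbA⟩, hbT⟩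
  · rintro h ⟨b, hb, hbT⟩
    exact (Finset.mem_sdiff.mp hb).2 (h hbT)

/-- the program Π_A = { ¬(⋁_{b ∈ V∖A} b) → a : a ∈ A } has ⟨A,A⟩
as its unique equilibrium model over V. -/
theorem piA_unique_eq_model (V A : Finset ℕ) (hAV : A ⊆ V) :
    ∀ T : Set ℕ,
      eqModel (V : Set ℕ)
        {φ : Fm | ∃ a ∈ A, φ = Fm.imp (Fm.neg (disjAtoms (V \ A))) (Fm.atom a)} T
      ↔ T = (A : Set ℕ) := by
  intro T
  constructor
  · rintro ⟨hTV, hmodel, hmin⟩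
    rw [htSatTh_neg_imp_atoms subset_rfl, not_satT_disjAtoms_sdiff_iff hTV] at hmodel
    have hTA : T ⊆ A := by
      by_contra hTA
      refine hmin ∅ (Set.empty_subset T) ?_ ?_
      · rintro rfl
        exact hTA (Set.empty_subset _)
      · rw [htSatTh_neg_imp_atoms (Set.empty_subset T), not_satT_disjAtoms_sdiff_iff hTV]
        exact fun h => absurd h hTA
    exact hTA.antisymm (hmodel hTA)
  · rintro rfl
    refine ⟨Finset.coe_subset.mpr hAV, ?_, fun H hHA hne hmodel => ?_⟩
    · rw [htSatTh_neg_imp_atoms subset_rfl]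
      exact fun _ => subset_rfl
    · rw [htSatTh_neg_imp_atoms hHA, not_satT_disjAtoms_sdiff_iff (Finset.coe_subset.mpr hAV)]
        at hmodel
      exact hne (hHA.antisymm (hmodel subset_rfl))
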